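/- (Dual rank formula) Let L be a finite modular lattice, I a supermatroid on L with base family B (maximal elements of I), and r(X) = max_{B ∈ B} |B ∧ X| the rank function. The dual supermatroid on the order dual L* has bases B* = B (under the identity order-reversing map), and its rank function r* satisfies r*(X) = r(X) + (|⊤| − |X|) − r(⊤) for all X ∈ L, where heights are taken in L. -/

import Mathlib

/-!
Covers raise heights by exactly one in a finite modular lattice, which yields the modular law
`ht (a ⊔ b) + ht (a ⊓ b) = ht a + ht b`. For a base `B` it gives
`ht ⊤ - ht (B ⊔ X) = ht (B ⊓ X) + (ht ⊤ - ht X - ht B)`, and all bases have the same height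
`r ⊤` (the equicardinality axiom at `X = ⊤`). So the set whose supremum is `r* X` is the set
whose supremum is `r X`, shifted by the constant `ht ⊤ - ht X - r ⊤`.
-/

/-- The height of an element: length of a maximal chain from the bottom. -/
noncomputable def ht {α : Type*} [Preorder α] (x : α) : ℕ := (Order.height x).toNat

section Height

variable {α : Type*} [Preorder α] [Finite α]

lemma height_ne_top_of_finite (x : α) : Order.height x ≠ ⊤ :=
  have : Fintype α := Fintype.ofFinite α
  ne_top_of_le_ne_top (ENat.natCast_ne_top (Fintype.card α))
    (Order.height_le fun p _ ↦ mod_cast p.length_lt_card.le)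

lemma natCast_ht (x : α) : (ht x : ℕ∞) = Order.height x :=
  ENat.natCast_toNat (height_ne_top_of_finite x)

lemma ht_strictMono : StrictMono (ht : α → ℕ) := fun a b hab ↦ by
  have := Order.height_strictMono hab (height_ne_top_of_finite a).lt_top
  rwa [← natCast_ht, ← natCast_ht, Nat.cast_lt] at this

lemma exists_covBy_ht_eq {b : α} {m : ℕ} (hb : ht b = m + 1) : ∃ x, x ⋖ b ∧ ht x = m := by
  have hb' : Order.height b = m + 1 := by rw [← natCast_ht, hb]; push_cast; rfl
  obtain ⟨-, ⟨x, hxb, hx⟩, hle⟩ := Order.height_eq_coe_add_one_iff.mp hb'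
  rw [← natCast_ht, Nat.cast_inj] at hx
  refine ⟨x, ⟨hxb, fun y hxy hyb ↦ ?_⟩, hx⟩
  have := hle y hyb
  rw [← natCast_ht, Nat.cast_le] at this
  exact absurd (ht_strictMono hxy) (by omega)

end Height

section Modular

variable {α : Type*} [Lattice α] [Finite α]

lemma ht_eq_add_one_of_covBy [IsWeakLowerModularLattice α] {a b : α} (hab : a ⋖ b) :
    ht b = ht a + 1 := by
  induction b using WellFoundedLT.induction generalizing a with
  | _ b ih =>
  have hlt := ht_strictMono hab.lt
  obtain ⟨x, hxb, hx⟩ := exists_covBy_ht_eq (b := b) (m := ht b - 1) (by omega)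
  by_cases hax : a = x
  · subst hax; omega
  have hsup : a ⊔ x = b := hab.wcovBy.sup_eq hxb.wcovBy hax
  have ha_sup : a ⋖ a ⊔ x := hsup ▸ hab
  have hx_sup : x ⋖ a ⊔ x := hsup ▸ hxb
  have hinf_a := ih a hab.lt (inf_covBy_of_covBy_sup_of_covBy_sup_left ha_sup hx_sup)
  have hinf_x := ih x hxb.lt (inf_covBy_of_covBy_sup_of_covBy_sup_right ha_sup hx_sup)
  omega

lemma ht_sup_add_ht_inf [IsModularLattice α] (a b : α) :
    ht (a ⊔ b) + ht (a ⊓ b) = ht a + ht b := by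
  induction a using WellFoundedLT.induction with
  | _ a ih =>
  by_cases hab : a ≤ b
  · rw [sup_eq_right.mpr hab, inf_eq_left.mpr hab, add_comm]
  obtain ⟨c, hc, hca⟩ := exists_le_covBy_of_lt (inf_lt_left.mpr hab)
  have hcb : c ⊓ b = a ⊓ b :=
    le_antisymm (inf_le_inf_right b hca.le) (le_inf hc inf_le_right)
  have hac : a ⊓ (c ⊔ b) = c := by
    rw [inf_comm, sup_inf_assoc_of_le b hca.le, sup_eq_left.mpr (inf_comm a b ▸ hc)]
  have hsup : a ⊔ (c ⊔ b) = a ⊔ b := by rw [← sup_assoc, sup_eq_left.mpr hca.le]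
  have hcov : c ⊔ b ⋖ a ⊔ b := hsup ▸ covBy_sup_of_inf_covBy_left (by rwa [hac])
  have := ih c hca.lt
  rw [hcb] at this
  rw [ht_eq_add_one_of_covBy hcov, ht_eq_add_one_of_covBy hca]
  omega

end Modular

lemma csSup_setOf_eq_add {ι G : Type*} [Finite ι] [ConditionallyCompleteLinearOrder G]
    [AddGroup G] [AddRightMono G] {p : ι → Prop} (hp : ∃ i, p i) {f g : ι → G} (c : G)
    (hfg : ∀ i, p i → g i = f i + c) :
    sSup {n | ∃ i, p i ∧ n = g i} = sSup {n | ∃ i, p i ∧ n = f i} + c := by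
  have hs : {n | ∃ i, p i ∧ n = g i} = OrderIso.addRight c '' {n | ∃ i, p i ∧ n = f i} := by
    ext n
    simp only [Set.mem_ofPred_eq, Set.mem_image, OrderIso.addRight_apply]
    constructor
    · rintro ⟨i, hi, rfl⟩; exact ⟨f i, ⟨i, hi, rfl⟩, (hfg i hi).symm⟩
    · rintro ⟨_, ⟨i, hi, rfl⟩, rfl⟩; exact ⟨i, hi, (hfg i hi).symm⟩
  obtain ⟨i, hi⟩ := hp
  have hbdd : BddAbove {n | ∃ i, p i ∧ n = f i} :=
    ((Set.finite_range f).subset (by rintro _ ⟨i, -, rfl⟩; exact ⟨i, rfl⟩)).bddAbove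
  rw [hs, ← (OrderIso.addRight c).map_csSup' (s := {n | ∃ i, p i ∧ n = f i})
    ⟨f i, i, hi, rfl⟩ hbdd, OrderIso.addRight_apply]

theorem dual_rank_formula_general {α : Type*} [Lattice α] [Fintype α] [BoundedOrder α]
    [IsModularLattice α]
    (𝓘 : Set α) (hne : 𝓘.Nonempty)
    (hH2 : ∀ X I₁ I₂ : α, Maximal (fun J => J ∈ 𝓘 ∧ J ≤ X) I₁ →
        Maximal (fun J => J ∈ 𝓘 ∧ J ≤ X) I₂ → ht I₁ = ht I₂)
    (r rstar : α → ℤ)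
    (hr : ∀ X : α, r X = sSup {n : ℤ | ∃ B : α, Maximal (· ∈ 𝓘) B ∧ n = ht (B ⊓ X)})
    (hrstar : ∀ X : α, rstar X =
        sSup {n : ℤ | ∃ B : α, Maximal (· ∈ 𝓘) B ∧ n = (ht (⊤ : α) : ℤ) - ht (B ⊔ X)}) :
    ∀ X : α, rstar X = r X + ((ht (⊤ : α) : ℤ) - ht X) - r ⊤ := by
  intro X
  obtain ⟨B₀, hB₀⟩ := (Set.toFinite 𝓘).exists_maximal hne
  have ht_base : ∀ B, Maximal (· ∈ 𝓘) B → ht B = ht B₀ := fun B hB ↦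
    hH2 ⊤ B B₀ (by simpa using hB) (by simpa using hB₀)
  have hr_top : r ⊤ = ht B₀ := by
    rw [hr, ← csSup_singleton (ht B₀ : ℤ)]
    congr 1
    ext n
    simp only [inf_top_eq, Set.mem_ofPred_eq, Set.mem_singleton_iff]
    exact ⟨fun ⟨B, hB, h⟩ ↦ by rw [h, ht_base B hB], fun h ↦ ⟨B₀, hB₀, h⟩⟩
  have hshift : ∀ B, Maximal (· ∈ 𝓘) B →
      (ht (⊤ : α) : ℤ) - ht (B ⊔ X) = ht (B ⊓ X) + ((ht (⊤ : α) : ℤ) - ht X - ht B₀) := by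
    intro B hB
    have := ht_sup_add_ht_inf B X
    rw [← ht_base B hB]
    omega
  rw [hrstar, csSup_setOf_eq_add ⟨B₀, hB₀⟩ _ hshift, hr, hr_top]
  ring

/-- Dual rank formula: the rank function of the dual supermatroid (on the order dual,
with the same bases, where the height of `Y` in the dual is `ht ⊤ - ht Y` and meet in
the dual is join) satisfies `r*(X) = r(X) + (|⊤| - |X|) - r(⊤)`. -/
theorem dual_rank_formula {α : Type*} [Lattice α] [Fintype α] [BoundedOrder α]
    [IsModularLattice α]
    (𝓘 : Set α) (hne : 𝓘.Nonempty) (hideal : IsLowerSet 𝓘)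
    (hH2 : ∀ X I₁ I₂ : α, Maximal (fun J => J ∈ 𝓘 ∧ J ≤ X) I₁ →
        Maximal (fun J => J ∈ 𝓘 ∧ J ≤ X) I₂ → ht I₁ = ht I₂)
    (r rstar : α → ℤ)
    (hr : ∀ X : α, r X = sSup {n : ℤ | ∃ B : α, Maximal (· ∈ 𝓘) B ∧ n = ht (B ⊓ X)})
    (hrstar : ∀ X : α, rstar X =
        sSup {n : ℤ | ∃ B : α, Maximal (· ∈ 𝓘) B ∧ n = (ht (⊤ : α) : ℤ) - ht (B ⊔ X)}) :
    ∀ X : α, rstar X = r X + ((ht (⊤ : α) : ℤ) - ht X) - r ⊤ :=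
  dual_rank_formula_general 𝓘 hne hH2 r rstar hr hrstar
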